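/- Let η ∈ ℝ, let U ⊆ ℝ² be open, and let u, v : U → ℝ be smooth functions satisfying the coupled KdV system u_t = −u_xxx + 6uvu_x and v_t = −v_xxx + 6uvv_x on U. Then the functions f̂₁₁ = u + v, f̂₂₁ = η, f̂₃₁ = v − u, f̂₁₂ = −u_xx − v_xx + 2(vu² + uv²) − η²(u + v) + η(v_x − u_x), f̂₂₂ = −η³ + 2(v·u_x − u·v_x) + 2η·uv, f̂₃₂ = u_xx − v_xx + 2(uv² − vu²) + η²(u − v) + η(u_x + v_x) satisfy, at every point of U, the local structure equations with δ = 1: −∂_t f̂₁₁ + ∂_x f̂₁₂ = f̂₃₁f̂₂₂ − f̂₃₂f̂₂₁, −∂_t f̂₂₁ + ∂_x f̂₂₂ = f̂₁₁f̂₃₂ − f̂₁₂f̂₃₁, −∂_t f̂₃₁ + ∂_x f̂₃₂ = f̂₁₁f̂₂₂ − f̂₁₂f̂₂₁. -/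

import Mathlib

/-- Partial derivative with respect to the first (space) variable. -/
noncomputable def px (f : ℝ × ℝ → ℝ) : ℝ × ℝ → ℝ := fun p => fderiv ℝ f p (1, 0)

/-- Partial derivative with respect to the second (time) variable. -/
noncomputable def pt (f : ℝ × ℝ → ℝ) : ℝ × ℝ → ℝ := fun p => fderiv ℝ f p (0, 1)

lemma contDiffOn_px {U : Set (ℝ × ℝ)} (hU : IsOpen U) {f : ℝ × ℝ → ℝ}
    (hf : ContDiffOn ℝ (⊤ : ℕ∞) f U) : ContDiffOn ℝ (⊤ : ℕ∞) (px f) U := by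
  have h := (hf.fderivWithin (m := (⊤ : ℕ∞)) hU.uniqueDiffOn (by simp)).clm_apply
    (contDiffOn_const (c := ((1:ℝ), (0:ℝ))))
  exact h.congr fun x hx => by simp [px, fderivWithin_of_isOpen hU hx]

lemma px_add {f g : ℝ × ℝ → ℝ} {p} (hf : DifferentiableAt ℝ f p)
    (hg : DifferentiableAt ℝ g p) : px (fun q => f q + g q) p = px f p + px g p := by
  simp [px, fderiv_fun_add hf hg]

lemma px_sub {f g : ℝ × ℝ → ℝ} {p} (hf : DifferentiableAt ℝ f p)
    (hg : DifferentiableAt ℝ g p) : px (fun q => f q - g q) p = px f p - px g p := by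
  simp [px, fderiv_fun_sub hf hg]

lemma px_mul {f g : ℝ × ℝ → ℝ} {p} (hf : DifferentiableAt ℝ f p)
    (hg : DifferentiableAt ℝ g p) :
    px (fun q => f q * g q) p = f p * px g p + g p * px f p := by
  simp [px, fderiv_fun_mul hf hg]

lemma px_neg {f : ℝ × ℝ → ℝ} {p} : px (fun q => -f q) p = -px f p := by
  simp [px, fderiv_neg]

lemma px_const {c : ℝ} {p} : px (fun _ => c) p = 0 := by simp [px]

lemma pt_add {f g : ℝ × ℝ → ℝ} {p} (hf : DifferentiableAt ℝ f p)
    (hg : DifferentiableAt ℝ g p) : pt (fun q => f q + g q) p = pt f p + pt g p := by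
  simp [pt, fderiv_fun_add hf hg]

lemma pt_sub {f g : ℝ × ℝ → ℝ} {p} (hf : DifferentiableAt ℝ f p)
    (hg : DifferentiableAt ℝ g p) : pt (fun q => f q - g q) p = pt f p - pt g p := by
  simp [pt, fderiv_fun_sub hf hg]

lemma pt_const {c : ℝ} {p} : pt (fun _ => c) p = 0 := by simp [pt]

/-- The local structure equations of a surface of constant curvature `-δ`,
for six functions `g i j : U → ℝ`. -/
def StructEqs (δ : ℝ) (g11 g12 g21 g22 g31 g32 : ℝ × ℝ → ℝ) (U : Set (ℝ × ℝ)) : Prop :=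
  ∀ p ∈ U,
    -(pt g11 p) + px g12 p = g31 p * g22 p - g32 p * g21 p ∧
    -(pt g21 p) + px g22 p = g11 p * g32 p - g12 p * g31 p ∧
    -(pt g31 p) + px g32 p = δ * (g11 p * g22 p - g12 p * g21 p)

/-- Every smooth solution of the coupled KdV system provides, via the stated
associated functions with parameter `η`, a solution of the structure equations
with `δ = 1` (pseudo-spherical surfaces). -/
theorem coupledKdV_describes_pss (η : ℝ) (U : Set (ℝ × ℝ)) (hU : IsOpen U)
    (u v : ℝ × ℝ → ℝ) (hu : ContDiffOn ℝ (⊤ : ℕ∞) u U) (hv : ContDiffOn ℝ (⊤ : ℕ∞) v U)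
    (hsys : ∀ p ∈ U,
      pt u p = -(px (px (px u)) p) + 6 * u p * v p * px u p ∧
      pt v p = -(px (px (px v)) p) + 6 * u p * v p * px v p) :
    StructEqs 1
      (fun p => u p + v p)
      (fun p => -(px (px u) p) - px (px v) p + 2 * (v p * u p ^ 2 + u p * v p ^ 2)
        - η ^ 2 * (u p + v p) + η * (px v p - px u p))
      (fun _ => η)
      (fun p => -η ^ 3 + 2 * (v p * px u p - u p * px v p) + 2 * η * (u p * v p))
      (fun p => v p - u p)
      (fun p => px (px u) p - px (px v) p + 2 * (u p * v p ^ 2 - v p * u p ^ 2)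
        + η ^ 2 * (u p - v p) + η * (px u p + px v p))
      U := by
  intro p hp
  have hpU : U ∈ nhds p := hU.mem_nhds hp
  have hu1 := contDiffOn_px hU hu
  have hv1 := contDiffOn_px hU hv
  have hu2 := contDiffOn_px hU hu1
  have hv2 := contDiffOn_px hU hv1
  have du : DifferentiableAt ℝ u p := (hu.contDiffAt hpU).differentiableAt (by simp)
  have dv : DifferentiableAt ℝ v p := (hv.contDiffAt hpU).differentiableAt (by simp)
  have du1 : DifferentiableAt ℝ (px u) p := (hu1.contDiffAt hpU).differentiableAt (by simp)
  have dv1 : DifferentiableAt ℝ (px v) p := (hv1.contDiffAt hpU).differentiableAt (by simp)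
  have du2 : DifferentiableAt ℝ (px (px u)) p := (hu2.contDiffAt hpU).differentiableAt (by simp)
  have dv2 : DifferentiableAt ℝ (px (px v)) p := (hv2.contDiffAt hpU).differentiableAt (by simp)
  obtain ⟨h1, h2⟩ := hsys p hp
  refine ⟨?_, ?_, ?_⟩
  · simp (disch := fun_prop) only [pow_two, px_add, px_sub, px_mul, px_neg, px_const,
      pt_add, pt_sub, pt_const]
    linear_combination -h1 - h2
  · simp (disch := fun_prop) only [pow_two, px_add, px_sub, px_mul, px_neg, px_const,
      pt_add, pt_sub, pt_const]
    ring
  · simp (disch := fun_prop) only [pow_two, px_add, px_sub, px_mul, px_neg, px_const,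
      pt_add, pt_sub, pt_const]
    linear_combination h1 - h2
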